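/- arXiv:2305.01817 — 4 statements merged into one kernel-verified Lean document; each statement's English description precedes it below -/
import Mathlib

section
/- Let $\widetilde N(\cdot)$ be a counting process on $[0,\tau]$ whose conditional rate given $\bm Z$ satisfies $\operatorname{E}\{d\widetilde N(t)\mid \bm Z\} = f(t, \bm\beta_0^\intercal \bm Z)\, g(\bm\gamma_0^\intercal \bm Z)\,dt$ with $\int_0^\tau f(t,x)\,dt = 1$ for all $x$, and let $C \le \tau$ be a censoring time independent of $\widetilde N(\cdot)$ given $\bm Z$, with $F(C, \bm\beta_0^\intercal \bm Z) > 0$ almost surely, where $F(t,x) = \int_0^t f(u,x)\,du$. Then with $N(t) = \widetilde N(\min(t,C))$, one has $\operatorname{E}\big\{ N(C)/F(C, \bm\beta_0^\intercal \bm Z) \,\big|\, \bm Z \big\} = g(\bm\gamma_0^\intercal \bm Z) = \operatorname{E}\{\widetilde N(\tau)\mid\bm Z\}$. -/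
/-!
Conditionally on `(Z, C)` the factor `F(C, β₀ᵀZ)` is known, so the pull-out property turns
`E{N(C) | Z, C} = F(C, β₀ᵀZ) g(γ₀ᵀZ)` into `E{N(C) / F(C, β₀ᵀZ) | Z, C} = g(γ₀ᵀZ)`, and the tower
property conditions this down to `Z`. Since `1 / F` is unbounded, the integrability of
`N(C) / F(C, β₀ᵀZ)` needed for the pull-out comes from monotone convergence along the truncations
`min (1 / F) n`, whose integrals against `N(C)` are bounded by `E g(γ₀ᵀZ)`.
-/

open MeasureTheory Matrix Filter Topology

namespace MeasureTheory

variable {Ω : Type*} {m m₀ : MeasurableSpace Ω} {μ : Measure Ω}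

theorem integrable_of_condExp_ae_eq_pos [NeZero μ] {X W : Ω → ℝ} (h : μ[X|m] =ᵐ[μ] W)
    (hW : ∀ᵐ ω ∂μ, 0 < W ω) : Integrable X μ := by
  by_contra hX
  rw [condExp_of_not_integrable hX] at h
  obtain ⟨ω, hω, hWω⟩ := (h.and hW).exists
  exact hWω.ne hω

theorem aestronglyMeasurable_of_condExp_eq_mul {X Y W : Ω → ℝ} (hW : AEStronglyMeasurable[m] W μ)
    (hW₀ : ∀ᵐ ω ∂μ, W ω ≠ 0) (h : μ[X|m] =ᵐ[μ] Y * W) : AEStronglyMeasurable[m] Y μ := by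
  refine (stronglyMeasurable_condExp.aestronglyMeasurable.div₀ hW :
    AEStronglyMeasurable[m] (μ[X|m] / W) μ).congr ?_
  filter_upwards [h, hW₀] with ω hω hWω
  simp [hω, hWω]

theorem integral_mul_condExp (hm : m ≤ m₀) [SigmaFinite (μ.trim hm)] {u X : Ω → ℝ} {c : ℝ}
    (hu : AEStronglyMeasurable[m] u μ) (hu_bdd : ∀ᵐ ω ∂μ, ‖u ω‖ ≤ c) (hX : Integrable X μ) :
    ∫ ω, u ω * X ω ∂μ = ∫ ω, u ω * μ[X|m] ω ∂μ := by
  rw [← integral_condExp hm]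
  exact integral_congr_ae
    (condExp_mul_of_aestronglyMeasurable_left hu (hX.bdd_mul (hu.mono hm) hu_bdd) hX)

theorem integrable_of_tendsto_of_monotone {F : ℕ → Ω → ℝ} {f : Ω → ℝ} {c : ℝ}
    (hF : ∀ n, Integrable (F n) μ) (hF₀ : ∀ n, 0 ≤ᵐ[μ] F n)
    (h_mono : ∀ᵐ ω ∂μ, Monotone fun n => F n ω)
    (h_lim : ∀ᵐ ω ∂μ, Tendsto (fun n => F n ω) atTop (𝓝 (f ω)))
    (h_bdd : ∀ n, ∫ ω, F n ω ∂μ ≤ c) : Integrable f μ := by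
  have hf₀ : 0 ≤ᵐ[μ] f := by
    filter_upwards [ae_all_iff.2 hF₀, h_lim] with ω hω hlim using ge_of_tendsto' hlim hω
  refine ⟨aestronglyMeasurable_of_tendsto_ae _ (fun n => (hF n).1) h_lim, ?_⟩
  rw [hasFiniteIntegral_iff_ofReal hf₀]
  have h_lintegral := lintegral_tendsto_of_tendsto_of_monotone
    (fun n => (hF n).1.aemeasurable.ennreal_ofReal)
    (h_mono.mono fun ω hω a b hab => ENNReal.ofReal_le_ofReal (hω hab))
    (h_lim.mono fun ω hω => (ENNReal.continuous_ofReal.tendsto _).comp hω)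
  refine (le_of_tendsto' h_lintegral fun n => ?_).trans_lt (ENNReal.ofReal_lt_top (r := c))
  rw [← ofReal_integral_eq_lintegral_ofReal (hF n) (hF₀ n)]
  exact ENNReal.ofReal_le_ofReal (h_bdd n)

theorem integrable_div_of_condExp_eq_mul (hm : m ≤ m₀) [SigmaFinite (μ.trim hm)] {X Y W : Ω → ℝ}
    (hX : Integrable X μ) (hX₀ : 0 ≤ᵐ[μ] X) (hY : AEStronglyMeasurable[m] Y μ)
    (hY₀ : ∀ᵐ ω ∂μ, 0 < Y ω) (hW : Integrable W μ) (hXYW : μ[X|m] =ᵐ[μ] Y * W) :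
    Integrable (X / Y) μ := by
  -- truncate the unbounded multiplier `Y⁻¹` so that the pull-out property applies
  set u : ℕ → Ω → ℝ := fun n ω => min (Y ω)⁻¹ n
  have hu : ∀ n, AEStronglyMeasurable[m] (u n) μ := fun n => by
    have := hY.inv₀; fun_prop
  have hu_nonneg : ∀ n, ∀ᵐ ω ∂μ, 0 ≤ u n ω := fun n => by
    filter_upwards [hY₀] with ω hω using le_min (inv_nonneg.2 hω.le) n.cast_nonneg
  have hu_bdd : ∀ n, ∀ᵐ ω ∂μ, ‖u n ω‖ ≤ n := fun n => by
    filter_upwards [hu_nonneg n] with ω hω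
    rw [Real.norm_of_nonneg hω]
    exact min_le_right _ _
  have h_int : ∀ n, ∫ ω, u n ω * X ω ∂μ ≤ ∫ ω, ‖W ω‖ ∂μ := fun n => by
    rw [integral_mul_condExp hm (hu n) (hu_bdd n) hX]
    refine integral_mono_ae (integrable_condExp.bdd_mul ((hu n).mono hm) (hu_bdd n)) hW.norm ?_
    filter_upwards [hXYW, hY₀, hu_nonneg n] with ω hω hYω huω
    have huY : u n ω * Y ω ≤ 1 := calc
      u n ω * Y ω ≤ (Y ω)⁻¹ * Y ω := mul_le_mul_of_nonneg_right (min_le_left _ _) hYω.le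
      _ = 1 := inv_mul_cancel₀ hYω.ne'
    calc u n ω * μ[X|m] ω = u n ω * Y ω * W ω := by rw [hω, Pi.mul_apply, mul_assoc]
      _ ≤ u n ω * Y ω * |W ω| := mul_le_mul_of_nonneg_left (le_abs_self _) (mul_nonneg huω hYω.le)
      _ ≤ ‖W ω‖ := mul_le_of_le_one_left (abs_nonneg _) huY
  refine integrable_of_tendsto_of_monotone (F := fun n ω => u n ω * X ω)
    (fun n => hX.bdd_mul ((hu n).mono hm) (hu_bdd n)) (fun n => ?_) ?_ ?_ h_int
  · filter_upwards [hX₀, hu_nonneg n] with ω hXω huω using mul_nonneg huω hXω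
  · filter_upwards [hX₀] with ω hω a b hab
    exact mul_le_mul_of_nonneg_right (min_le_min_left _ (Nat.cast_le.2 hab)) hω
  · filter_upwards with ω
    refine tendsto_const_nhds.congr' ?_
    filter_upwards [eventually_ge_atTop ⌈(Y ω)⁻¹⌉₊] with n hn
    rw [show u n ω = (Y ω)⁻¹ from min_eq_left (Nat.ceil_le.1 hn), Pi.div_apply, div_eq_inv_mul]

theorem condExp_div_of_condExp_eq_mul (hm : m ≤ m₀) [SigmaFinite (μ.trim hm)] {X Y W : Ω → ℝ}
    (hX : Integrable X μ) (hX₀ : 0 ≤ᵐ[μ] X) (hY : AEStronglyMeasurable[m] Y μ)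
    (hY₀ : ∀ᵐ ω ∂μ, 0 < Y ω) (hW : Integrable W μ) (hXYW : μ[X|m] =ᵐ[μ] Y * W) :
    μ[X / Y|m] =ᵐ[μ] W := by
  have h_int := integrable_div_of_condExp_eq_mul hm hX hX₀ hY hY₀ hW hXYW
  rw [div_eq_inv_mul] at h_int ⊢
  filter_upwards [condExp_mul_of_aestronglyMeasurable_left hY.inv₀ h_int hX, hXYW, hY₀]
    with ω hω hXω hYω
  rw [hω, Pi.mul_apply, hXω, Pi.mul_apply, Pi.inv_apply, inv_mul_cancel_left₀ hYω.ne']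

theorem condExp_div_of_condExp_eq_mul_of_le {m₁ m₂ : MeasurableSpace Ω} (hm₁₂ : m₁ ≤ m₂)
    (hm₂ : m₂ ≤ m₀) [SigmaFinite (μ.trim (hm₁₂.trans hm₂))] {X Y W : Ω → ℝ}
    (hX : Integrable X μ) (hX₀ : 0 ≤ᵐ[μ] X) (hY : AEStronglyMeasurable[m₂] Y μ)
    (hY₀ : ∀ᵐ ω ∂μ, 0 < Y ω) (hW : Integrable W μ) (hW₁ : AEStronglyMeasurable[m₁] W μ)
    (hXYW : μ[X|m₂] =ᵐ[μ] Y * W) :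
    μ[X / Y|m₁] =ᵐ[μ] W := by
  have : SigmaFinite (μ.trim hm₂) := sigmaFiniteTrim_mono hm₂ hm₁₂
  calc μ[X / Y|m₁] =ᵐ[μ] μ[μ[X / Y|m₂]|m₁] := (condExp_condExp_of_le hm₁₂ hm₂).symm
    _ =ᵐ[μ] μ[W|m₁] := condExp_congr_ae (condExp_div_of_condExp_eq_mul hm₂ hX hX₀ hY hY₀ hW hXYW)
    _ =ᵐ[μ] W := condExp_of_aestronglyMeasurable' (hm₁₂.trans hm₂) hW₁ hW

end MeasureTheory

theorem stmt5_general
    {Ω : Type*} [MeasurableSpace Ω] (P : Measure Ω) [IsProbabilityMeasure P]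
    (p : ℕ) (Z : Ω → Fin p → ℝ) (hZ : Measurable Z)
    (τ : ℝ)
    (C : Ω → ℝ) (hC : Measurable C)
    (T : Ω → Finset ℝ)
    (β₀ γ₀ : Fin p → ℝ)
    (f : ℝ → ℝ → ℝ)
    (hf_norm : ∀ x, (∫ t in (0:ℝ)..τ, f t x) = 1)
    (g : ℝ → ℝ) (hg_pos : ∀ x, 0 < g x)
    (F : ℝ → ℝ → ℝ) (hF : ∀ t x, F t x = ∫ u in (0:ℝ)..t, f u x)
    (hFC_pos : ∀ᵐ ω ∂P, 0 < F (C ω) (β₀ ⬝ᵥ Z ω))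
    -- conditional rate of `Ñ` given `Z`:  E{dÑ(t) ∣ Z} = f(t,β₀ᵀZ) g(γ₀ᵀZ) dt
    (hrate : ∀ φ : ℝ → ℝ, Measurable φ → (∃ M, ∀ x, |φ x| ≤ M) →
      P[(fun ω => (T ω).sum φ) | MeasurableSpace.comap Z inferInstance]
        =ᵐ[P] fun ω => ∫ t in (0:ℝ)..τ, φ t * (f t (β₀ ⬝ᵥ Z ω) * g (γ₀ ⬝ᵥ Z ω)))
    -- conditional independence of `C` and `Ñ` given `Z`:
    -- E{dÑ(t) ∣ Z, C} = f(t,β₀ᵀZ) g(γ₀ᵀZ) dt on {t ≤ C}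
    (hcondind : ∀ φ : ℝ → ℝ, Measurable φ → (∃ M, ∀ x, |φ x| ≤ M) →
      P[(fun ω => ((T ω).filter (fun s => s ≤ C ω)).sum φ) |
          MeasurableSpace.comap (fun ω => (Z ω, C ω)) inferInstance]
        =ᵐ[P] fun ω => ∫ t in (0:ℝ)..(C ω), φ t * (f t (β₀ ⬝ᵥ Z ω) * g (γ₀ ⬝ᵥ Z ω))) :
    P[(fun ω => (((T ω).filter (fun s => s ≤ C ω)).card : ℝ) / F (C ω) (β₀ ⬝ᵥ Z ω)) |
        MeasurableSpace.comap Z inferInstance]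
      =ᵐ[P] (fun ω => g (γ₀ ⬝ᵥ Z ω)) ∧
    P[(fun ω => ((T ω).card : ℝ)) | MeasurableSpace.comap Z inferInstance]
      =ᵐ[P] (fun ω => g (γ₀ ⬝ᵥ Z ω)) := by
  have h_one : ∃ M, ∀ x : ℝ, |(fun _ : ℝ => (1 : ℝ)) x| ≤ M := ⟨1, by simp⟩
  have hV : P[(fun ω => ((T ω).card : ℝ)) | MeasurableSpace.comap Z inferInstance]
      =ᵐ[P] fun ω => g (γ₀ ⬝ᵥ Z ω) := by
    simpa [intervalIntegral.integral_mul_const, hf_norm] using hrate _ measurable_const h_one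
  have hW : P[(fun ω => (((T ω).filter (fun s => s ≤ C ω)).card : ℝ)) |
      MeasurableSpace.comap (fun ω => (Z ω, C ω)) inferInstance]
      =ᵐ[P] (fun ω => F (C ω) (β₀ ⬝ᵥ Z ω)) * fun ω => g (γ₀ ⬝ᵥ Z ω) := by
    simpa [intervalIntegral.integral_mul_const, hF, Pi.mul_def]
      using hcondind _ measurable_const h_one
  have hZ_le : MeasurableSpace.comap Z inferInstance ≤
      MeasurableSpace.comap (fun ω => (Z ω, C ω)) inferInstance :=
    Measurable.comap_le (measurable_fst.comp (comap_measurable (fun ω => (Z ω, C ω))))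
  have hV_meas := stronglyMeasurable_condExp.aestronglyMeasurable.congr hV
  refine ⟨condExp_div_of_condExp_eq_mul_of_le hZ_le (hZ.prodMk hC).comap_le ?_ ?_ ?_ hFC_pos
    (integrable_condExp.congr hV) hV_meas hW, hV⟩
  · exact integrable_of_condExp_ae_eq_pos hW
      (by filter_upwards [hFC_pos] with ω hω using mul_pos hω (hg_pos _))
  · exact ae_of_all _ fun ω => Nat.cast_nonneg _
  · exact aestronglyMeasurable_of_condExp_eq_mul (hV_meas.mono hZ_le)
      (ae_of_all _ fun ω => (hg_pos _).ne') hW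

/-- **Equation (10).** Let `Ñ` be a counting process on `[0,τ]` with jump times
`T ω ⊆ [0,τ]` (finitely many), whose conditional rate given `Z` is
`f(t, β₀ᵀZ) g(γ₀ᵀZ) dt` with `∫_0^τ f(t,x) dt = 1`, `f ≥ 0` and `g > 0`, and let `C ≤ τ` be a
censoring time conditionally independent of `Ñ` given `Z` (expressed by the conditional rate
of the censored process given `(Z,C)`), with `F(C, β₀ᵀZ) > 0` a.s. where
`F(t,x) = ∫_0^t f(u,x) du`.  Then, with `N(t) = Ñ(min(t,C))`,
`E{ N(C)/F(C, β₀ᵀZ) ∣ Z } = g(γ₀ᵀZ) = E{Ñ(τ) ∣ Z}` a.s. -/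
theorem stmt5
    {Ω : Type*} [MeasurableSpace Ω] (P : Measure Ω) [IsProbabilityMeasure P]
    (p : ℕ) (Z : Ω → Fin p → ℝ) (hZ : Measurable Z)
    (τ : ℝ) (hτ : 0 < τ)
    (C : Ω → ℝ) (hC : Measurable C) (hCτ : ∀ ω, C ω ∈ Set.Icc 0 τ)
    (T : Ω → Finset ℝ) (hT : ∀ ω, ∀ s ∈ T ω, s ∈ Set.Icc 0 τ)
    (hbdd : ∃ B : ℕ, ∀ ω, (T ω).card ≤ B)
    (β₀ γ₀ : Fin p → ℝ)
    (f : ℝ → ℝ → ℝ) (hf_nonneg : ∀ t x, 0 ≤ f t x)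
    (hf_norm : ∀ x, (∫ t in (0:ℝ)..τ, f t x) = 1)
    (g : ℝ → ℝ) (hg_pos : ∀ x, 0 < g x)
    (F : ℝ → ℝ → ℝ) (hF : ∀ t x, F t x = ∫ u in (0:ℝ)..t, f u x)
    (hFC_pos : ∀ᵐ ω ∂P, 0 < F (C ω) (β₀ ⬝ᵥ Z ω))
    -- conditional rate of `Ñ` given `Z`:  E{dÑ(t) ∣ Z} = f(t,β₀ᵀZ) g(γ₀ᵀZ) dt
    (hrate : ∀ φ : ℝ → ℝ, Measurable φ → (∃ M, ∀ x, |φ x| ≤ M) →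
      P[(fun ω => (T ω).sum φ) | MeasurableSpace.comap Z inferInstance]
        =ᵐ[P] fun ω => ∫ t in (0:ℝ)..τ, φ t * (f t (β₀ ⬝ᵥ Z ω) * g (γ₀ ⬝ᵥ Z ω)))
    -- conditional independence of `C` and `Ñ` given `Z`:
    -- E{dÑ(t) ∣ Z, C} = f(t,β₀ᵀZ) g(γ₀ᵀZ) dt on {t ≤ C}
    (hcondind : ∀ φ : ℝ → ℝ, Measurable φ → (∃ M, ∀ x, |φ x| ≤ M) →
      P[(fun ω => ((T ω).filter (fun s => s ≤ C ω)).sum φ) |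
          MeasurableSpace.comap (fun ω => (Z ω, C ω)) inferInstance]
        =ᵐ[P] fun ω => ∫ t in (0:ℝ)..(C ω), φ t * (f t (β₀ ⬝ᵥ Z ω) * g (γ₀ ⬝ᵥ Z ω))) :
    P[(fun ω => (((T ω).filter (fun s => s ≤ C ω)).card : ℝ) / F (C ω) (β₀ ⬝ᵥ Z ω)) |
        MeasurableSpace.comap Z inferInstance]
      =ᵐ[P] (fun ω => g (γ₀ ⬝ᵥ Z ω)) ∧
    P[(fun ω => ((T ω).card : ℝ)) | MeasurableSpace.comap Z inferInstance]
      =ᵐ[P] (fun ω => g (γ₀ ⬝ᵥ Z ω)) :=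
  stmt5_general P p Z hZ τ C hC T β₀ γ₀ f hf_norm g hg_pos F hF hFC_pos hrate hcondind
end

section
/- Let $W$ be a real random variable symmetric about $0$ with $\operatorname{E}|W|>0$, and let $g:\mathbb{R}\to(0,\infty)$ be strictly increasing and bounded. Suppose constants $c_0 \in \mathbb{R}$ and $\mu \in \mathbb{R}$ satisfy the two moment equations $\operatorname{E}\{g(W)\} = \operatorname{E}\{\exp(c_0 + \mu W)\}$ and $\operatorname{E}\{W g(W)\} = \operatorname{E}\{W \exp(c_0 + \mu W)\}$, with all expectations finite. Then $\mu > 0$. -/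
/-!
For a measure `ν` on `ℝ` invariant under `x ↦ -x`, symmetrization gives
`2 ∫ x f(x) dν = ∫ x (f(x) - f(-x)) dν`, whose integrand is nonnegative for monotone `f` and
positive off `0` for strictly monotone `f`. For the law of `W` this makes `E[W g(W)] > 0`,
while for `μ ≤ 0` the function `x ↦ exp(c₀ + μ x)` is antitone, so `E[W exp(c₀ + μ W)] ≤ 0`,
contradicting the second moment equation.
-/

open MeasureTheory

theorem mul_sub_comp_neg_nonneg {f : ℝ → ℝ} (hf : Monotone f) (x : ℝ) :
    0 ≤ x * (f x - f (-x)) := by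
  rcases le_total 0 x with hx | hx
  · exact mul_nonneg hx (sub_nonneg.2 (hf (by linarith)))
  · exact mul_nonneg_of_nonpos_of_nonpos hx (sub_nonpos.2 (hf (by linarith)))

theorem mul_sub_comp_neg_pos {f : ℝ → ℝ} (hf : StrictMono f) {x : ℝ} (hx : x ≠ 0) :
    0 < x * (f x - f (-x)) := by
  rcases hx.lt_or_gt with hx | hx
  · exact mul_pos_of_neg_of_neg hx (sub_neg.2 (hf (by linarith)))
  · exact mul_pos hx (sub_pos.2 (hf (by linarith)))

section NegInvariant

variable {ν : Measure ℝ} [ν.IsNegInvariant] {f : ℝ → ℝ}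

theorem integral_mul_comp_neg (f : ℝ → ℝ) :
    ∫ x, x * f (-x) ∂ν = -∫ x, x * f x ∂ν := by
  rw [← integral_neg_eq_self, ← integral_neg]
  simp

theorem integrable_mul_comp_neg (hf : Integrable (fun x => x * f x) ν) :
    Integrable (fun x => x * f (-x)) ν := by
  simpa using hf.comp_neg.neg

theorem two_mul_integral_mul_eq (hf : Integrable (fun x => x * f x) ν) :
    2 * ∫ x, x * f x ∂ν = ∫ x, x * (f x - f (-x)) ∂ν := by
  simp only [mul_sub]
  rw [integral_sub hf (integrable_mul_comp_neg hf), integral_mul_comp_neg]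
  ring

theorem integral_mul_nonneg_of_monotone (hf : Monotone f) : 0 ≤ ∫ x, x * f x ∂ν := by
  by_cases hfi : Integrable (fun x => x * f x) ν
  · have hsymm := two_mul_integral_mul_eq hfi
    have hnonneg := integral_nonneg (μ := ν) (f := fun x => x * (f x - f (-x)))
      (mul_sub_comp_neg_nonneg hf)
    linarith
  · rw [integral_undef hfi]

theorem integral_mul_nonpos_of_antitone (hf : Antitone f) : ∫ x, x * f x ∂ν ≤ 0 := by
  simpa [integral_neg] using integral_mul_nonneg_of_monotone (ν := ν) hf.neg

theorem integral_mul_pos_of_strictMono (hf : StrictMono f)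
    (hfi : Integrable (fun x => x * f x) ν) (hν : ¬ ∀ᵐ x ∂ν, x = 0) :
    0 < ∫ x, x * f x ∂ν := by
  have hsupp : Function.support (fun x => x * (f x - f (-x))) = {0}ᶜ := by
    ext x
    rcases eq_or_ne x 0 with rfl | hx
    · simp
    · simpa [hx] using (mul_sub_comp_neg_pos hf hx).ne'
  have hint : Integrable (fun x => x * (f x - f (-x))) ν := by
    simpa only [Pi.sub_def, mul_sub] using hfi.sub (integrable_mul_comp_neg hfi)
  have hpos := (integral_pos_iff_support_of_nonneg (mul_sub_comp_neg_nonneg hf.monotone) hint).2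
    (by rw [hsupp, pos_iff_ne_zero]; exact fun h => hν (ae_iff.2 h))
  rw [← two_mul_integral_mul_eq hfi] at hpos
  linarith

end NegInvariant

theorem isNegInvariant_map_of_map_neg_eq {Ω : Type*} [MeasurableSpace Ω] {P : Measure Ω}
    {W : Ω → ℝ} (hW : Measurable W) (hsymm : P.map W = P.map (fun ω => -W ω)) :
    (P.map W).IsNegInvariant :=
  ⟨by rw [Measure.neg, Measure.map_map measurable_neg hW]; exact hsymm.symm⟩

theorem stmt7_general
    {Ω : Type*} [MeasurableSpace Ω] (P : Measure Ω)
    (W : Ω → ℝ) (hW : Measurable W)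
    (hsymm : Measure.map W P = Measure.map (fun ω => -W ω) P)
    (habs_pos : 0 < ∫ ω, |W ω| ∂P)
    (g : ℝ → ℝ) (hg_mono : StrictMono g)
    (c₀ μ : ℝ)
    (hint2 : Integrable (fun ω => W ω * g (W ω)) P)
    (heq2 : ∫ ω, W ω * g (W ω) ∂P = ∫ ω, W ω * Real.exp (c₀ + μ * W ω) ∂P) :
    0 < μ := by
  have := isNegInvariant_map_of_map_neg_eq hW hsymm
  have hW_ne_zero : ¬ ∀ᵐ x ∂P.map W, x = 0 := fun h => by
    have : ∫ ω, |W ω| ∂P = 0 := integral_eq_zero_of_ae <| by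
      filter_upwards [ae_of_ae_map hW.aemeasurable h] with ω hω
      simp [hω]
    exact habs_pos.ne' this
  have hg_meas : Measurable fun x => x * g x := measurable_id.mul hg_mono.monotone.measurable
  have hg_int : Integrable (fun x => x * g x) (P.map W) :=
    (integrable_map_measure hg_meas.aestronglyMeasurable hW.aemeasurable).2 hint2
  have hpos := integral_mul_pos_of_strictMono hg_mono hg_int hW_ne_zero
  by_contra! hμ
  have hanti : Antitone fun x => Real.exp (c₀ + μ * x) :=
    Real.exp_monotone.comp_antitone fun x y hxy => by nlinarith
  have hnonpos := integral_mul_nonpos_of_antitone (ν := P.map W) hanti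
  rw [integral_map hW.aemeasurable hg_meas.aestronglyMeasurable] at hpos
  rw [integral_map hW.aemeasurable (by fun_prop)] at hnonpos
  linarith

/-- Let `W` be symmetric about `0` with `E|W| > 0`, and `g : ℝ → (0,∞)`
strictly increasing and bounded.  If constants `c₀, μ` satisfy the moment equations
`E g(W) = E exp(c₀ + μ W)` and `E[W g(W)] = E[W exp(c₀ + μ W)]` (all expectations finite),
then `μ > 0`. -/
theorem stmt7
    {Ω : Type*} [MeasurableSpace Ω] (P : Measure Ω) [IsProbabilityMeasure P]
    (W : Ω → ℝ) (hW : Measurable W)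
    (hsymm : Measure.map W P = Measure.map (fun ω => -W ω) P)
    (habs : Integrable (fun ω => |W ω|) P)
    (habs_pos : 0 < ∫ ω, |W ω| ∂P)
    (g : ℝ → ℝ) (hg_pos : ∀ x, 0 < g x) (hg_mono : StrictMono g)
    (hg_bdd : ∃ M, ∀ x, g x ≤ M)
    (c₀ μ : ℝ)
    (hint1 : Integrable (fun ω => g (W ω)) P)
    (hint2 : Integrable (fun ω => W ω * g (W ω)) P)
    (hint3 : Integrable (fun ω => Real.exp (c₀ + μ * W ω)) P)
    (hint4 : Integrable (fun ω => W ω * Real.exp (c₀ + μ * W ω)) P)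
    (heq1 : ∫ ω, g (W ω) ∂P = ∫ ω, Real.exp (c₀ + μ * W ω) ∂P)
    (heq2 : ∫ ω, W ω * g (W ω) ∂P = ∫ ω, W ω * Real.exp (c₀ + μ * W ω) ∂P) :
    0 < μ :=
  stmt7_general P W hW hsymm habs_pos g hg_mono c₀ μ hint2 heq2
end

section
/- Let $J$ be a $p\times(p-1)$ real matrix, and let $J'$ be a $(p-1)\times p$ matrix with $J' J = I_{p-1}$ (so $J$ has full column rank $p-1$). Let $V$ and $\Sigma$ be symmetric $p \times p$ matrices whose column spaces are contained in the column space of $J$, such that $J^\intercal V J$ is invertible, and such that $V = P V P$ and $\Sigma = P\Sigma P$, where $P = J (J^\intercal J)^{-1} J^\intercal$ is the orthogonal projection onto the column space of $J$. Then $(J^\intercal V J)^{-1} J^\intercal \Sigma J (J^\intercal V J)^{-1} = J' \big( V^{-}\Sigma V^{-}\big) (J')^\intercal$, where $V^-$ denotes the Moore–Penrose pseudoinverse. -/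
open Matrix

/-- Sandwich-variance identity.  Let `J` be `p × (p-1)` with a left inverse
`J'` (so `J' J = I`), let `V, Σ` be symmetric `p × p` matrices with `Jᵀ V J` invertible, and
let `P = J (Jᵀ J)⁻¹ Jᵀ` be the orthogonal projection onto the column space of `J`.  If
`V = P V P` and `Σ = P Σ P` (in particular the column spaces of `V` and `Σ` lie in that of
`J`), and `Vm` is the Moore–Penrose pseudoinverse of `V` (characterized by the four Penrose
conditions), then `(Jᵀ V J)⁻¹ Jᵀ Σ J (Jᵀ V J)⁻¹ = J' (Vm Σ Vm) (J')ᵀ`. -/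
theorem stmt11
    (p : ℕ)
    (J : Matrix (Fin p) (Fin (p - 1)) ℝ)
    (J' : Matrix (Fin (p - 1)) (Fin p) ℝ)
    (hJ'J : J' * J = 1)
    (V Sg : Matrix (Fin p) (Fin p) ℝ)
    (hV_symm : V.IsSymm) (hSg_symm : Sg.IsSymm)
    (hJVJ : IsUnit (Jᵀ * V * J))
    (P : Matrix (Fin p) (Fin p) ℝ) (hP : P = J * (Jᵀ * J)⁻¹ * Jᵀ)
    (hVP : V = P * V * P) (hSgP : Sg = P * Sg * P)
    -- `Vm` is the Moore–Penrose pseudoinverse of `V` (the four Penrose conditions)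
    (Vm : Matrix (Fin p) (Fin p) ℝ)
    (hPen1 : V * Vm * V = V) (hPen2 : Vm * V * Vm = Vm)
    (hPen3 : (V * Vm)ᵀ = V * Vm) (hPen4 : (Vm * V)ᵀ = Vm * V) :
    (Jᵀ * V * J)⁻¹ * (Jᵀ * Sg * J) * (Jᵀ * V * J)⁻¹ = J' * (Vm * Sg * Vm) * J'ᵀ := by
  -- `N = Jᵀ J` is invertible since `J` has a left inverse
  have hN : IsUnit (Jᵀ * J) := by
    rw [← Matrix.mulVec_injective_iff_isUnit]
    intro x y hxy
    have hz : (Jᵀ * J) *ᵥ (x - y) = 0 := by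
      rw [Matrix.mulVec_sub, hxy, sub_self]
    have h1 : (J *ᵥ (x - y)) ⬝ᵥ (J *ᵥ (x - y)) = 0 := by
      have h0 : (x - y) ⬝ᵥ ((Jᵀ * J) *ᵥ (x - y)) = 0 := by rw [hz, dotProduct_zero]
      rwa [← Matrix.mulVec_mulVec, Matrix.dotProduct_mulVec, Matrix.vecMul_transpose] at h0
    have h2 : J *ᵥ (x - y) = 0 := dotProduct_self_eq_zero.mp h1
    have h3 : x - y = 0 := by
      calc x - y = (J' * J) *ᵥ (x - y) := by rw [hJ'J, Matrix.one_mulVec]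
        _ = J' *ᵥ (J *ᵥ (x - y)) := (Matrix.mulVec_mulVec _ _ _).symm
        _ = 0 := by rw [h2, Matrix.mulVec_zero]
    exact sub_eq_zero.mp h3
  set N : Matrix (Fin (p - 1)) (Fin (p - 1)) ℝ := Jᵀ * J with hNdef
  set A : Matrix (Fin (p - 1)) (Fin (p - 1)) ℝ := Jᵀ * V * J with hAdef
  have hNdet : IsUnit N.det := (Matrix.isUnit_iff_isUnit_det N).mp hN
  have hAdet : IsUnit A.det := (Matrix.isUnit_iff_isUnit_det A).mp hJVJ
  have hNN : N⁻¹ * N = 1 := Matrix.nonsing_inv_mul _ hNdet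
  have hNN' : N * N⁻¹ = 1 := Matrix.mul_nonsing_inv _ hNdet
  have hAA : A⁻¹ * A = 1 := Matrix.nonsing_inv_mul _ hAdet
  have hAA' : A * A⁻¹ = 1 := Matrix.mul_nonsing_inv _ hAdet
  -- projection identities
  have hPJ : P * J = J := by
    rw [hP]
    have e : J * N⁻¹ * Jᵀ * J = J * (N⁻¹ * (Jᵀ * J)) := by simp only [Matrix.mul_assoc]
    rw [e, ← hNdef, hNN, Matrix.mul_one]
  have hJtP : Jᵀ * P = Jᵀ := by
    rw [hP]
    have e : Jᵀ * (J * N⁻¹ * Jᵀ) = (Jᵀ * J) * N⁻¹ * Jᵀ := by simp only [Matrix.mul_assoc]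
    rw [e, ← hNdef, hNN', Matrix.one_mul]
  have hPP : P * P = P := by
    nth_rewrite 2 [hP]
    have e : P * (J * N⁻¹ * Jᵀ) = (P * J) * (N⁻¹ * Jᵀ) := by simp only [Matrix.mul_assoc]
    rw [e, hPJ, ← Matrix.mul_assoc, ← hP]
  have hPV : P * V = V := by
    conv_lhs => rw [hVP]
    have e : P * (P * V * P) = P * P * V * P := by simp only [Matrix.mul_assoc]
    rw [e, hPP, ← hVP]
  have hVP' : V * P = V := by
    conv_lhs => rw [hVP]
    have e : P * V * P * P = P * V * (P * P) := by simp only [Matrix.mul_assoc]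
    rw [e, hPP, ← hVP]
  -- interaction of V with J
  have hVJ : V * J = J * (N⁻¹ * A) := by
    calc V * J = (P * V * P) * J := by rw [← hVP]
      _ = P * V * (P * J) := by simp only [Matrix.mul_assoc]
      _ = P * (V * J) := by rw [hPJ, Matrix.mul_assoc]
      _ = (J * N⁻¹ * Jᵀ) * (V * J) := by rw [hP]
      _ = J * N⁻¹ * (Jᵀ * (V * J)) := by simp only [Matrix.mul_assoc]
      _ = J * N⁻¹ * (Jᵀ * V * J) := by rw [Matrix.mul_assoc Jᵀ V J]
      _ = J * (N⁻¹ * A) := by rw [← hAdef, Matrix.mul_assoc]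
  have hJtV : Jᵀ * V = A * (N⁻¹ * Jᵀ) := by
    calc Jᵀ * V = Jᵀ * (V * P) := by rw [hVP']
      _ = Jᵀ * (V * (J * N⁻¹ * Jᵀ)) := by rw [hP]
      _ = (Jᵀ * (V * J)) * (N⁻¹ * Jᵀ) := by simp only [Matrix.mul_assoc]
      _ = (Jᵀ * V * J) * (N⁻¹ * Jᵀ) := by rw [Matrix.mul_assoc Jᵀ V J]
      _ = A * (N⁻¹ * Jᵀ) := by rw [← hAdef]
  set W : Matrix (Fin p) (Fin p) ℝ := J * A⁻¹ * Jᵀ with hWdef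
  have hVW : V * W = P := by
    calc V * W = (V * J) * (A⁻¹ * Jᵀ) := by rw [hWdef]; simp only [Matrix.mul_assoc]
      _ = (J * (N⁻¹ * A)) * (A⁻¹ * Jᵀ) := by rw [hVJ]
      _ = J * N⁻¹ * (A * A⁻¹) * Jᵀ := by simp only [Matrix.mul_assoc]
      _ = J * N⁻¹ * Jᵀ := by rw [hAA', Matrix.mul_one]
      _ = P := hP.symm
  have hWV : W * V = P := by
    calc W * V = (J * A⁻¹) * (Jᵀ * V) := by rw [hWdef]; simp only [Matrix.mul_assoc]
      _ = (J * A⁻¹) * (A * (N⁻¹ * Jᵀ)) := by rw [hJtV]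
      _ = J * (A⁻¹ * A) * (N⁻¹ * Jᵀ) := by simp only [Matrix.mul_assoc]
      _ = J * (N⁻¹ * Jᵀ) := by rw [hAA, Matrix.mul_one]
      _ = J * N⁻¹ * Jᵀ := (Matrix.mul_assoc _ _ _).symm
      _ = P := hP.symm
  have hVWV : V * W * V = V := by rw [hVW, hPV]
  have hPsymm : Pᵀ = P := by
    rw [hP, Matrix.transpose_mul (J * N⁻¹) Jᵀ, Matrix.transpose_mul J N⁻¹,
      Matrix.transpose_transpose, Matrix.transpose_nonsing_inv, hNdef,
      Matrix.transpose_mul Jᵀ J, Matrix.transpose_transpose]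
    have e : Jᵀᵀ * ((Jᵀ * J)⁻¹ * Jᵀ) = J * (Jᵀ * J)⁻¹ * Jᵀ := by
      rw [Matrix.transpose_transpose]; simp only [Matrix.mul_assoc]
    exact e
  -- uniqueness of the Moore–Penrose pseudoinverse: Vm = W
  have hVVm : V * Vm = V * W := by
    calc V * Vm = (V * Vm)ᵀ := hPen3.symm
      _ = Vmᵀ * Vᵀ := Matrix.transpose_mul _ _
      _ = Vmᵀ * (V * W * V)ᵀ := by rw [hVWV]
      _ = Vmᵀ * (Vᵀ * (V * W)ᵀ) := by rw [Matrix.transpose_mul (V * W) V]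
      _ = (Vmᵀ * Vᵀ) * (V * W)ᵀ := (Matrix.mul_assoc _ _ _).symm
      _ = (V * Vm)ᵀ * (V * W)ᵀ := by rw [← Matrix.transpose_mul V Vm]
      _ = (V * Vm) * (V * W) := by rw [hPen3, hVW, hPsymm]
      _ = V * Vm * V * W := by simp only [Matrix.mul_assoc]
      _ = V * W := by rw [hPen1]
  have hVmV : Vm * V = W * V := by
    calc Vm * V = (Vm * V)ᵀ := hPen4.symm
      _ = Vᵀ * Vmᵀ := Matrix.transpose_mul _ _
      _ = (V * W * V)ᵀ * Vmᵀ := by rw [hVWV]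
      _ = (V * (W * V))ᵀ * Vmᵀ := by rw [Matrix.mul_assoc]
      _ = ((W * V)ᵀ * Vᵀ) * Vmᵀ := by rw [Matrix.transpose_mul V (W * V)]
      _ = (W * V)ᵀ * (Vᵀ * Vmᵀ) := Matrix.mul_assoc _ _ _
      _ = (W * V)ᵀ * (Vm * V)ᵀ := by rw [← Matrix.transpose_mul Vm V]
      _ = (W * V) * (Vm * V) := by rw [hPen4, hWV, hPsymm]
      _ = W * (V * Vm * V) := by simp only [Matrix.mul_assoc]
      _ = W * V := by rw [hPen1]
  have hVmW : Vm = W := by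
    calc Vm = Vm * V * Vm := hPen2.symm
      _ = W * V * Vm := by rw [hVmV]
      _ = W * (V * Vm) := Matrix.mul_assoc _ _ _
      _ = W * (V * W) := by rw [hVVm]
      _ = (W * V) * W := (Matrix.mul_assoc _ _ _).symm
      _ = P * W := by rw [hWV]
      _ = (P * J) * (A⁻¹ * Jᵀ) := by rw [hWdef]; simp only [Matrix.mul_assoc]
      _ = J * A⁻¹ * Jᵀ := by rw [hPJ, ← Matrix.mul_assoc]
      _ = W := hWdef.symm
  have hJJ't : Jᵀ * J'ᵀ = 1 := by
    rw [← Matrix.transpose_mul, hJ'J, Matrix.transpose_one]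
  rw [hVmW, hWdef]
  calc A⁻¹ * (Jᵀ * Sg * J) * A⁻¹
      = A⁻¹ * ((Jᵀ * Sg * J) * A⁻¹) := Matrix.mul_assoc _ _ _
    _ = (J' * J) * (A⁻¹ * ((Jᵀ * Sg * J) * (A⁻¹ * (Jᵀ * J'ᵀ)))) := by
        rw [hJ'J, hJJ't, Matrix.one_mul, Matrix.mul_one]
    _ = J' * (J * A⁻¹ * Jᵀ * Sg * (J * A⁻¹ * Jᵀ)) * J'ᵀ := by simp only [Matrix.mul_assoc]
end

section
/- Let $h(x, y) = I(y > x)$ and let $(\bm Z_1, \mathcal{N}_1), (\bm Z_2, \mathcal{N}_2)$ be i.i.d. pairs where $\operatorname{E}(\mathcal{N}\mid \bm Z) = g(\bm\gamma_0^\intercal \bm Z)$ with $g$ strictly increasing, and $\mathcal{N} \ge 0$. Then for any vector $\bm\gamma$, the population objective $Q(\bm\gamma) = \operatorname{E}\{ I(\bm\gamma^\intercal \bm Z_1 > \bm\gamma^\intercal \bm Z_2)\, \mathcal{N}_1 \}$ satisfies $Q(\bm\gamma_0) \ge Q(\bm\gamma)$; that is, $\bm\gamma_0$ maximizes the maximum-rank-correlation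 population criterion. -/
open MeasureTheory Matrix

/-- Maximum rank correlation: if `(Z₁,𝒩₁), (Z₂,𝒩₂)` are i.i.d. pairs with
`𝒩 ≥ 0` and `E(𝒩 ∣ Z) = g(γ₀ᵀ Z)` for strictly increasing `g`, then the population criterion
`Q(γ) = E[ I(γᵀ Z₁ > γᵀ Z₂) 𝒩₁ ]` (over independent copies) satisfies `Q(γ) ≤ Q(γ₀)` for
every `γ` whose ties `γᵀZ₁ = γᵀZ₂` have probability zero (ties also assumed null for `γ₀`). -/
theorem stmt14
    {Ω : Type*} [MeasurableSpace Ω] (P : Measure Ω) [IsProbabilityMeasure P]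
    (p : ℕ) (Z : Ω → Fin p → ℝ) (hZ : Measurable Z)
    (𝒩 : Ω → ℝ) (h𝒩meas : Measurable 𝒩) (h𝒩nonneg : ∀ ω, 0 ≤ 𝒩 ω)
    (h𝒩int : Integrable 𝒩 P)
    (γ₀ : Fin p → ℝ)
    (g : ℝ → ℝ) (hg_mono : StrictMono g)
    (hcond : P[𝒩 | MeasurableSpace.comap Z inferInstance]
      =ᵐ[P] fun ω => g (γ₀ ⬝ᵥ Z ω))
    (Q : (Fin p → ℝ) → ℝ)
    (hQ : ∀ γ, Q γ = ∫ ω, (if γ ⬝ᵥ Z ω.1 > γ ⬝ᵥ Z ω.2 then (1:ℝ) else 0) * 𝒩 ω.1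
        ∂(P.prod P))
    (hties₀ : (P.prod P) {ω : Ω × Ω | γ₀ ⬝ᵥ Z ω.1 = γ₀ ⬝ᵥ Z ω.2} = 0) :
    ∀ γ : Fin p → ℝ,
      (P.prod P) {ω : Ω × Ω | γ ⬝ᵥ Z ω.1 = γ ⬝ᵥ Z ω.2} = 0 →
      Q γ ≤ Q γ₀ := by
  intro γ hties
  -- measurability of linear functionals
  have hdotp : ∀ γ' : Fin p → ℝ, Measurable (fun z : Fin p → ℝ => γ' ⬝ᵥ z) := by
    intro γ'
    simp only [dotProduct]
    exact Finset.measurable_sum _ fun i _ => measurable_const.mul (measurable_pi_apply i)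
  have hdot : ∀ γ' : Fin p → ℝ, Measurable (fun ω => γ' ⬝ᵥ Z ω) := fun γ' =>
    (hdotp γ').comp hZ
  have hm : MeasurableSpace.comap Z inferInstance ≤ ‹MeasurableSpace Ω› := hZ.comap_le
  set G : Ω → ℝ := fun ω => g (γ₀ ⬝ᵥ Z ω) with hGdef
  have hGmeas : Measurable G := hg_mono.monotone.measurable.comp (hdot γ₀)
  have hGint : Integrable G P :=
    (integrable_condExp (f := 𝒩) (m := MeasurableSpace.comap Z inferInstance)).congr hcond
  -- Step B: conditioning
  have key : ∀ (γ' : Fin p → ℝ) (c : ℝ),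
      ∫ ω, (if γ' ⬝ᵥ Z ω > c then (1:ℝ) else 0) * 𝒩 ω ∂P
        = ∫ ω, (if γ' ⬝ᵥ Z ω > c then (1:ℝ) else 0) * G ω ∂P := by
    intro γ' c
    have hsm : MeasurableSet[MeasurableSpace.comap Z inferInstance] {ω | γ' ⬝ᵥ Z ω > c} :=
      ⟨{z | γ' ⬝ᵥ z > c}, measurableSet_lt measurable_const (hdotp γ'), rfl⟩
    have hs' : MeasurableSet {ω | γ' ⬝ᵥ Z ω > c} := hm _ hsm
    have e1 : ∀ f : Ω → ℝ,
        (fun ω => (if γ' ⬝ᵥ Z ω > c then (1:ℝ) else 0) * f ω)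
          = fun ω => ({ω | γ' ⬝ᵥ Z ω > c}).indicator f ω := by
      intro f; funext ω
      by_cases h : γ' ⬝ᵥ Z ω > c <;> simp [Set.indicator_apply, h]
    rw [e1, e1, integral_indicator hs', integral_indicator hs',
      ← setIntegral_condExp hm h𝒩int hsm]
    exact setIntegral_congr_ae hs' (hcond.mono fun ω h _ => h)
  -- integrability helpers on the product
  have hNfst : Integrable (fun ω : Ω × Ω => 𝒩 ω.1) (P.prod P) := by
    have h1 : Integrable 𝒩 ((P.prod P).map Prod.fst) := by
      simpa using h𝒩int
    exact (integrable_map_measure h𝒩meas.aestronglyMeasurable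
      measurable_fst.aemeasurable).mp h1
  have hGfst : Integrable (fun ω : Ω × Ω => G ω.1) (P.prod P) := by
    have h1 : Integrable G ((P.prod P).map Prod.fst) := by
      simpa using hGint
    exact (integrable_map_measure hGmeas.aestronglyMeasurable
      measurable_fst.aemeasurable).mp h1
  have hGsnd : Integrable (fun ω : Ω × Ω => G ω.2) (P.prod P) := by
    have h1 : Integrable G ((P.prod P).map Prod.snd) := by
      simpa using hGint
    exact (integrable_map_measure hGmeas.aestronglyMeasurable
      measurable_snd.aemeasurable).mp h1
  have hIndMeas : ∀ γ' : Fin p → ℝ,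
      Measurable (fun ω : Ω × Ω => (if γ' ⬝ᵥ Z ω.1 > γ' ⬝ᵥ Z ω.2 then (1:ℝ) else 0)) := by
    intro γ'
    exact Measurable.ite
      (measurableSet_lt ((hdot γ').comp measurable_snd) ((hdot γ').comp measurable_fst))
      measurable_const measurable_const
  have hIndMeas' : ∀ γ' : Fin p → ℝ,
      Measurable (fun ω : Ω × Ω => (if γ' ⬝ᵥ Z ω.2 > γ' ⬝ᵥ Z ω.1 then (1:ℝ) else 0)) := by
    intro γ'
    exact Measurable.ite
      (measurableSet_lt ((hdot γ').comp measurable_fst) ((hdot γ').comp measurable_snd))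
      measurable_const measurable_const
  have hIbound : ∀ (c : Prop) [Decidable c] (x : ℝ), ‖(if c then (1:ℝ) else 0) * x‖ ≤ ‖x‖ := by
    intro c _ x
    by_cases h : c <;> simp [h, abs_nonneg]
  have hintN : ∀ γ' : Fin p → ℝ,
      Integrable (fun ω : Ω × Ω =>
        (if γ' ⬝ᵥ Z ω.1 > γ' ⬝ᵥ Z ω.2 then (1:ℝ) else 0) * 𝒩 ω.1) (P.prod P) := by
    intro γ'
    refine hNfst.norm.mono' (((hIndMeas γ').mul
      (h𝒩meas.comp measurable_fst)).aestronglyMeasurable) ?_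
    exact Filter.Eventually.of_forall fun ω => hIbound _ _
  have hintG : ∀ γ' : Fin p → ℝ,
      Integrable (fun ω : Ω × Ω =>
        (if γ' ⬝ᵥ Z ω.1 > γ' ⬝ᵥ Z ω.2 then (1:ℝ) else 0) * G ω.1) (P.prod P) := by
    intro γ'
    refine hGfst.norm.mono' (((hIndMeas γ').mul
      (hGmeas.comp measurable_fst)).aestronglyMeasurable) ?_
    exact Filter.Eventually.of_forall fun ω => hIbound _ _
  have hintG' : ∀ γ' : Fin p → ℝ,
      Integrable (fun ω : Ω × Ω =>
        (if γ' ⬝ᵥ Z ω.2 > γ' ⬝ᵥ Z ω.1 then (1:ℝ) else 0) * G ω.2) (P.prod P) := by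
    intro γ'
    refine hGsnd.norm.mono' (((hIndMeas' γ').mul
      (hGmeas.comp measurable_snd)).aestronglyMeasurable) ?_
    exact Filter.Eventually.of_forall fun ω => hIbound _ _
  -- Step C: Q γ' = ∫ I * G₁
  have hQG : ∀ γ' : Fin p → ℝ,
      Q γ' = ∫ ω, (if γ' ⬝ᵥ Z ω.1 > γ' ⬝ᵥ Z ω.2 then (1:ℝ) else 0) * G ω.1 ∂(P.prod P) := by
    intro γ'
    rw [hQ γ', integral_prod_symm _ (hintN γ'), integral_prod_symm _ (hintG γ')]
    exact integral_congr_ae (Filter.Eventually.of_forall fun ω₂ => key γ' (γ' ⬝ᵥ Z ω₂))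
  -- Step D: swap symmetry
  have hswap : ∀ γ' : Fin p → ℝ,
      (∫ ω, (if γ' ⬝ᵥ Z ω.1 > γ' ⬝ᵥ Z ω.2 then (1:ℝ) else 0) * G ω.1 ∂(P.prod P))
        = ∫ ω, (if γ' ⬝ᵥ Z ω.2 > γ' ⬝ᵥ Z ω.1 then (1:ℝ) else 0) * G ω.2 ∂(P.prod P) := by
    intro γ'
    exact (integral_prod_swap
      (fun ω : Ω × Ω => (if γ' ⬝ᵥ Z ω.1 > γ' ⬝ᵥ Z ω.2 then (1:ℝ) else 0) * G ω.1)).symm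
  -- Doubling
  have hdouble : ∀ γ' : Fin p → ℝ,
      2 * Q γ' = ∫ ω,
        ((if γ' ⬝ᵥ Z ω.1 > γ' ⬝ᵥ Z ω.2 then (1:ℝ) else 0) * G ω.1
          + (if γ' ⬝ᵥ Z ω.2 > γ' ⬝ᵥ Z ω.1 then (1:ℝ) else 0) * G ω.2) ∂(P.prod P) := by
    intro γ'
    rw [integral_add (hintG γ') (hintG' γ'), two_mul]
    nth_rewrite 1 [hQG γ']
    rw [hQG γ', hswap γ']
  -- a.e. no ties
  have hae : ∀ᵐ ω ∂(P.prod P),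
      γ ⬝ᵥ Z ω.1 ≠ γ ⬝ᵥ Z ω.2 ∧ γ₀ ⬝ᵥ Z ω.1 ≠ γ₀ ⬝ᵥ Z ω.2 := by
    have h1 : ∀ᵐ ω ∂(P.prod P), γ ⬝ᵥ Z ω.1 ≠ γ ⬝ᵥ Z ω.2 := by
      rw [MeasureTheory.ae_iff]; simpa using hties
    have h2 : ∀ᵐ ω ∂(P.prod P), γ₀ ⬝ᵥ Z ω.1 ≠ γ₀ ⬝ᵥ Z ω.2 := by
      rw [MeasureTheory.ae_iff]; simpa using hties₀
    exact h1.and h2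
  -- pointwise comparison a.e.
  have hmono : (∫ ω,
        ((if γ ⬝ᵥ Z ω.1 > γ ⬝ᵥ Z ω.2 then (1:ℝ) else 0) * G ω.1
          + (if γ ⬝ᵥ Z ω.2 > γ ⬝ᵥ Z ω.1 then (1:ℝ) else 0) * G ω.2) ∂(P.prod P))
      ≤ ∫ ω,
        ((if γ₀ ⬝ᵥ Z ω.1 > γ₀ ⬝ᵥ Z ω.2 then (1:ℝ) else 0) * G ω.1
          + (if γ₀ ⬝ᵥ Z ω.2 > γ₀ ⬝ᵥ Z ω.1 then (1:ℝ) else 0) * G ω.2) ∂(P.prod P) := by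
    refine integral_mono_ae ((hintG γ).add (hintG' γ)) ((hintG γ₀).add (hintG' γ₀)) ?_
    refine hae.mono ?_
    rintro ω ⟨hab, huv⟩
    simp only [hGdef]
    set a := γ ⬝ᵥ Z ω.1
    set b := γ ⬝ᵥ Z ω.2
    set u := γ₀ ⬝ᵥ Z ω.1
    set v := γ₀ ⬝ᵥ Z ω.2
    rcases lt_or_gt_of_ne huv with huv' | huv'
    · -- u < v : RHS = g v
      have hgv : g u ≤ g v := (hg_mono huv').le
      rcases lt_or_gt_of_ne hab with hab' | hab'
      · simp [not_lt.mpr huv'.le, huv', hab', not_lt.mpr hab'.le]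
      · simp [not_lt.mpr huv'.le, huv', hab', not_lt.mpr hab'.le, hgv]
    · -- v < u : RHS = g u
      have hgu : g v ≤ g u := (hg_mono huv').le
      rcases lt_or_gt_of_ne hab with hab' | hab'
      · simp [not_lt.mpr huv'.le, huv', hab', not_lt.mpr hab'.le, hgu]
      · simp [not_lt.mpr huv'.le, huv', hab', not_lt.mpr hab'.le]
  have : 2 * Q γ ≤ 2 * Q γ₀ := by
    rw [hdouble γ, hdouble γ₀]; exact hmono
  linarith
end
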